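/- Let W be a real m×n matrix and G_in, G_out real n×n and m×m matrices; let η, γ, B be nonnegative reals with ‖W‖₂ ≤ γ, ‖G_in‖_F ≤ B, ‖G_out‖_F ≤ B. Define E₂(X) = I + X + (1/2)X², W⁺ = E₂(−η G_out) · W · E₂(−η G_in), S = ‖G_in‖_F² + ‖G_out‖_F², and K = γ(η² + (B/2)η³ + (B²/8)η⁴). Then ‖W⁺ − W‖_F² ≤ (4 η² γ² + 4 K² B²) · S. -/
import Mathlib

open Matrix

/-- The Frobenius norm of a real matrix: `‖A‖_F = sqrt (trace (Aᵀ * A))`. -/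
noncomputable def frobNorm {m n : ℕ} (A : Matrix (Fin m) (Fin n) ℝ) : ℝ :=
  Real.sqrt (Matrix.trace (Aᵀ * A))

/-- The spectral norm of a real matrix: the operator norm of the induced linear map
between Euclidean spaces. -/
noncomputable def specNorm {m n : ℕ} (A : Matrix (Fin m) (Fin n) ℝ) : ℝ :=
  ‖(LinearMap.toContinuousLinearMap (Matrix.toEuclideanLin A) :
      EuclideanSpace ℝ (Fin n) →L[ℝ] EuclideanSpace ℝ (Fin m))‖

/-- Second-order truncation of the matrix exponential: `E₂(X) = I + X + (1/2) X²`. -/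
noncomputable def expTrunc2 {k : ℕ} (X : Matrix (Fin k) (Fin k) ℝ) :
    Matrix (Fin k) (Fin k) ℝ :=
  1 + X + (1 / 2 : ℝ) • (X * X)

set_option maxHeartbeats 1000000

lemma trace_transpose_mul_self {m n : ℕ} (A : Matrix (Fin m) (Fin n) ℝ) :
    Matrix.trace (Aᵀ * A) = ∑ i, ∑ j, (A i j) ^ 2 := by
  simp_rw [Matrix.trace, Matrix.diag, Matrix.mul_apply, Matrix.transpose_apply, sq]
  exact Finset.sum_comm

section frob
attribute [local instance] Matrix.frobeniusSeminormedAddCommGroup Matrix.frobeniusNormedAddCommGroup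
  Matrix.frobeniusNormedSpace

lemma frobNorm_eq_norm {m n : ℕ} (A : Matrix (Fin m) (Fin n) ℝ) : frobNorm A = ‖A‖ := by
  rw [frobNorm, trace_transpose_mul_self, Matrix.frobenius_norm_def, ← Real.sqrt_eq_rpow]
  have : ∀ (x : ℝ), ‖x‖ ^ (2:ℝ) = x ^ 2 := fun x => by
    rw [show ((2:ℝ)) = ((2:ℕ):ℝ) by norm_num, Real.rpow_natCast, Real.norm_eq_abs, sq_abs]
  simp_rw [this]

lemma frobNorm_nonneg {m n : ℕ} (A : Matrix (Fin m) (Fin n) ℝ) : 0 ≤ frobNorm A :=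
  Real.sqrt_nonneg _

lemma frobNorm_add_le {m n : ℕ} (A B : Matrix (Fin m) (Fin n) ℝ) :
    frobNorm (A + B) ≤ frobNorm A + frobNorm B := by
  simp_rw [frobNorm_eq_norm]; exact norm_add_le A B

lemma frobNorm_neg {m n : ℕ} (A : Matrix (Fin m) (Fin n) ℝ) : frobNorm (-A) = frobNorm A := by
  simp_rw [frobNorm_eq_norm]; exact norm_neg A

lemma frobNorm_smul {m n : ℕ} (c : ℝ) (A : Matrix (Fin m) (Fin n) ℝ) :
    frobNorm (c • A) = |c| * frobNorm A := by
  simp_rw [frobNorm_eq_norm]; rw [norm_smul, Real.norm_eq_abs]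

lemma frobNorm_mul_le {l m n : ℕ} (A : Matrix (Fin l) (Fin m) ℝ) (B : Matrix (Fin m) (Fin n) ℝ) :
    frobNorm (A * B) ≤ frobNorm A * frobNorm B := by
  simp_rw [frobNorm_eq_norm]; exact Matrix.frobenius_norm_mul A B

lemma frobNorm_transpose {m n : ℕ} (A : Matrix (Fin m) (Fin n) ℝ) :
    frobNorm Aᵀ = frobNorm A := by
  simp_rw [frobNorm_eq_norm]; exact Matrix.frobenius_norm_transpose A
end frob

lemma frobNorm_sq {m n : ℕ} (A : Matrix (Fin m) (Fin n) ℝ) :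
    frobNorm A ^ 2 = ∑ i, ∑ j, (A i j) ^ 2 := by
  rw [frobNorm, trace_transpose_mul_self, Real.sq_sqrt]
  positivity

section spec
open scoped Matrix.Norms.L2Operator

lemma specNorm_eq_norm {m n : ℕ} (A : Matrix (Fin m) (Fin n) ℝ) : specNorm A = ‖A‖ := rfl

lemma specNorm_nonneg {m n : ℕ} (A : Matrix (Fin m) (Fin n) ℝ) : 0 ≤ specNorm A := by
  rw [specNorm_eq_norm]; exact norm_nonneg A

lemma specNorm_transpose {m n : ℕ} (A : Matrix (Fin m) (Fin n) ℝ) :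
    specNorm Aᵀ = specNorm A := by
  rw [specNorm_eq_norm, specNorm_eq_norm, ← Matrix.l2_opNorm_conjTranspose A,
    Matrix.conjTranspose_eq_transpose_of_trivial]

lemma specNorm_mulVec_sq {p q : ℕ} (M : Matrix (Fin p) (Fin q) ℝ) (x : Fin q → ℝ) :
    ∑ i, (M.mulVec x i) ^ 2 ≤ specNorm M ^ 2 * ∑ j, (x j) ^ 2 := by
  have h := Matrix.l2_opNorm_mulVec M ((EuclideanSpace.equiv (Fin q) ℝ).symm x)
  have hsq : ∀ (k : ℕ) (v : Fin k → ℝ),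
      ‖((EuclideanSpace.equiv (Fin k) ℝ).symm v : EuclideanSpace ℝ (Fin k))‖ ^ 2
        = ∑ i, (v i) ^ 2 := by
    intro k v
    rw [EuclideanSpace.norm_eq, Real.sq_sqrt (by positivity)]
    simp [sq_abs]
  have h2 : ‖((EuclideanSpace.equiv (Fin p) ℝ).symm (M.mulVec x) : EuclideanSpace ℝ (Fin p))‖ ^ 2
      ≤ (specNorm M * ‖((EuclideanSpace.equiv (Fin q) ℝ).symm x : EuclideanSpace ℝ (Fin q))‖) ^ 2 := by
    apply pow_le_pow_left₀ (norm_nonneg _) _ 2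
    exact h
  rw [hsq] at h2
  refine h2.trans (le_of_eq ?_)
  rw [mul_pow, hsq]
end spec

lemma expTrunc2_decomp {m n : ℕ} (P : Matrix (Fin m) (Fin m) ℝ)
    (W : Matrix (Fin m) (Fin n) ℝ) (Q : Matrix (Fin n) (Fin n) ℝ) :
    expTrunc2 P * W * expTrunc2 Q - W =
      P * W + W * Q + P * (W * Q) + ((1/2 : ℝ) • (P * P)) * W + W * ((1/2 : ℝ) • (Q * Q))
        + ((1/2 : ℝ) • (P * P)) * (W * Q) + (P * W) * ((1/2 : ℝ) • (Q * Q))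
        + ((1/2 : ℝ) • (P * P)) * (W * ((1/2 : ℝ) • (Q * Q))) := by
  simp only [expTrunc2]
  simp only [Matrix.add_mul, Matrix.mul_add, Matrix.one_mul, Matrix.mul_one, Matrix.mul_assoc, sub_eq_add_neg]
  abel

lemma frobNorm_mul_spec_le {l m n : ℕ} (A : Matrix (Fin l) (Fin m) ℝ)
    (W : Matrix (Fin m) (Fin n) ℝ) : frobNorm (A * W) ≤ frobNorm A * specNorm W := by
  have hrow : ∀ i, ∑ j, ((A * W) i j) ^ 2 ≤ specNorm W ^ 2 * ∑ k, (A i k) ^ 2 := by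
    intro i
    have he : ∀ j, (A * W) i j = (Wᵀ.mulVec (A i)) j := by
      intro j
      simp [Matrix.mul_apply, Matrix.mulVec, dotProduct, Matrix.transpose_apply, mul_comm]
    simp_rw [he]
    simpa [specNorm_transpose] using specNorm_mulVec_sq Wᵀ (A i)
  have key : Matrix.trace ((A * W)ᵀ * (A * W)) ≤ (frobNorm A * specNorm W) ^ 2 := by
    rw [trace_transpose_mul_self, mul_pow, frobNorm_sq, Finset.sum_mul]
    calc (∑ i, ∑ j, ((A * W) i j) ^ 2) ≤ ∑ i, specNorm W ^ 2 * ∑ k, (A i k) ^ 2 :=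
          Finset.sum_le_sum fun i _ => hrow i
      _ = ∑ i, (∑ k, (A i k) ^ 2) * specNorm W ^ 2 := by simp_rw [mul_comm]
  calc frobNorm (A * W) ≤ Real.sqrt ((frobNorm A * specNorm W) ^ 2) := Real.sqrt_le_sqrt key
    _ = frobNorm A * specNorm W :=
        Real.sqrt_sq (mul_nonneg (frobNorm_nonneg A) (specNorm_nonneg W))

lemma frobNorm_spec_mul_le {l m n : ℕ} (W : Matrix (Fin l) (Fin m) ℝ)
    (B : Matrix (Fin m) (Fin n) ℝ) : frobNorm (W * B) ≤ specNorm W * frobNorm B := by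
  have h := frobNorm_mul_spec_le Bᵀ Wᵀ
  rw [← frobNorm_transpose (W * B), Matrix.transpose_mul]
  rw [frobNorm_transpose, specNorm_transpose] at h
  linarith

/-- Squared-displacement bound for the truncated bilateral Pion update: with
`W⁺ = E₂(-η G_out) W E₂(-η G_in)`, `S = ‖G_in‖_F² + ‖G_out‖_F²` and
`K = γ(η² + (B/2)η³ + (B²/8)η⁴)`, we have `‖W⁺ - W‖_F² ≤ (4η²γ² + 4K²B²) S`. -/
theorem pion_displacement_bound {m n : ℕ}
    (W : Matrix (Fin m) (Fin n) ℝ)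
    (Gin : Matrix (Fin n) (Fin n) ℝ) (Gout : Matrix (Fin m) (Fin m) ℝ)
    (η γ B : ℝ) (hη : 0 ≤ η) (hγ : 0 ≤ γ) (hB : 0 ≤ B)
    (hW : specNorm W ≤ γ)
    (hGin : frobNorm Gin ≤ B) (hGout : frobNorm Gout ≤ B) :
    frobNorm (expTrunc2 (-(η • Gout)) * W * expTrunc2 (-(η • Gin)) - W) ^ 2 ≤
      (4 * η ^ 2 * γ ^ 2 +
          4 * (γ * (η ^ 2 + (B / 2) * η ^ 3 + (B ^ 2 / 8) * η ^ 4)) ^ 2 * B ^ 2) *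
        (frobNorm Gin ^ 2 + frobNorm Gout ^ 2) := by
  set a : ℝ := frobNorm Gin with ha'
  set b : ℝ := frobNorm Gout with hb'
  have ha0 : 0 ≤ a := frobNorm_nonneg Gin
  have hb0 : 0 ≤ b := frobNorm_nonneg Gout
  clear_value a b
  set P : Matrix (Fin m) (Fin m) ℝ := -(η • Gout) with hPdef
  set Q : Matrix (Fin n) (Fin n) ℝ := -(η • Gin) with hQdef
  set cP : Matrix (Fin m) (Fin m) ℝ := (1/2 : ℝ) • (P * P) with hcPdef
  set cQ : Matrix (Fin n) (Fin n) ℝ := (1/2 : ℝ) • (Q * Q) with hcQdef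
  -- decomposition
  have hdecomp : expTrunc2 P * W * expTrunc2 Q - W =
      P * W + W * Q + P * (W * Q) + cP * W + W * cQ + cP * (W * Q) + (P * W) * cQ
        + cP * (W * cQ) := expTrunc2_decomp P W Q
  -- norms of pieces
  have hP : frobNorm P = η * b := by
    rw [hPdef, frobNorm_neg, frobNorm_smul, abs_of_nonneg hη, ← hb']
  have hQ : frobNorm Q = η * a := by
    rw [hQdef, frobNorm_neg, frobNorm_smul, abs_of_nonneg hη, ← ha']
  have hcP : frobNorm cP ≤ 1/2 * ((η*b) * (η*b)) := by
    rw [hcPdef, frobNorm_smul]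
    have := frobNorm_mul_le P P
    rw [hP] at this
    calc |1/2| * frobNorm (P*P) ≤ |(1/2 : ℝ)| * ((η*b)*(η*b)) := by
          apply mul_le_mul_of_nonneg_left this (abs_nonneg _)
      _ = 1/2 * ((η*b)*(η*b)) := by norm_num
  have hcQ : frobNorm cQ ≤ 1/2 * ((η*a) * (η*a)) := by
    rw [hcQdef, frobNorm_smul]
    have := frobNorm_mul_le Q Q
    rw [hQ] at this
    calc |1/2| * frobNorm (Q*Q) ≤ |(1/2 : ℝ)| * ((η*a)*(η*a)) := by
          apply mul_le_mul_of_nonneg_left this (abs_nonneg _)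
      _ = 1/2 * ((η*a)*(η*a)) := by norm_num
  clear_value P Q cP cQ
  have hab : 0 ≤ η * a := by positivity
  have hbb : 0 ≤ η * b := by positivity
  have hs0 : 0 ≤ specNorm W := specNorm_nonneg W
  -- term bounds
  have hPW : frobNorm (P * W) ≤ (η*b) * γ := by
    refine (frobNorm_mul_spec_le P W).trans ?_
    rw [hP]
    exact mul_le_mul (le_refl _) hW hs0 hbb
  have hWQ : frobNorm (W * Q) ≤ γ * (η*a) := by
    refine (frobNorm_spec_mul_le W Q).trans ?_
    rw [hQ]
    exact mul_le_mul hW (le_refl _) hab hγ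
  have hWcQ : frobNorm (W * cQ) ≤ γ * (1/2 * ((η*a)*(η*a))) := by
    refine (frobNorm_spec_mul_le W cQ).trans ?_
    exact mul_le_mul hW hcQ (frobNorm_nonneg _) hγ
  have ht3 : frobNorm (P * (W * Q)) ≤ (η*b) * (γ * (η*a)) := by
    refine (frobNorm_mul_le P (W*Q)).trans ?_
    rw [hP]
    exact mul_le_mul (le_refl _) hWQ (frobNorm_nonneg _) hbb
  have ht4 : frobNorm (cP * W) ≤ (1/2 * ((η*b)*(η*b))) * γ := by
    refine (frobNorm_mul_spec_le cP W).trans ?_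
    exact mul_le_mul hcP hW hs0 (by positivity)
  have ht6 : frobNorm (cP * (W * Q)) ≤ (1/2 * ((η*b)*(η*b))) * (γ * (η*a)) := by
    refine (frobNorm_mul_le cP (W*Q)).trans ?_
    exact mul_le_mul hcP hWQ (frobNorm_nonneg _) (by positivity)
  have ht7 : frobNorm ((P * W) * cQ) ≤ ((η*b)*γ) * (1/2 * ((η*a)*(η*a))) := by
    refine (frobNorm_mul_le (P*W) cQ).trans ?_
    exact mul_le_mul hPW hcQ (frobNorm_nonneg _) (by positivity)
  have ht8 : frobNorm (cP * (W * cQ)) ≤ (1/2 * ((η*b)*(η*b))) * (γ * (1/2 * ((η*a)*(η*a)))) := by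
    refine (frobNorm_mul_le cP (W*cQ)).trans ?_
    exact mul_le_mul hcP hWcQ (frobNorm_nonneg _) (by positivity)
  -- triangle inequality
  set F : ℝ := frobNorm (expTrunc2 P * W * expTrunc2 Q - W) with hF
  clear_value F
  have hF0 : 0 ≤ F := by rw [hF]; exact frobNorm_nonneg _
  have htri : F ≤ (η*b)*γ + γ*(η*a) + (η*b)*(γ*(η*a)) + (1/2*((η*b)*(η*b)))*γ
      + γ*(1/2*((η*a)*(η*a))) + (1/2*((η*b)*(η*b)))*(γ*(η*a))
      + ((η*b)*γ)*(1/2*((η*a)*(η*a)))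
      + (1/2*((η*b)*(η*b)))*(γ*(1/2*((η*a)*(η*a)))) := by
    rw [hF, hdecomp]
    calc frobNorm (P*W + W*Q + P*(W*Q) + cP*W + W*cQ + cP*(W*Q) + (P*W)*cQ + cP*(W*cQ))
        ≤ frobNorm (P*W + W*Q + P*(W*Q) + cP*W + W*cQ + cP*(W*Q) + (P*W)*cQ)
          + frobNorm (cP*(W*cQ)) := frobNorm_add_le _ _
      _ ≤ frobNorm (P*W + W*Q + P*(W*Q) + cP*W + W*cQ + cP*(W*Q)) + frobNorm ((P*W)*cQ)
          + frobNorm (cP*(W*cQ)) := by linarith [frobNorm_add_le (P*W + W*Q + P*(W*Q) + cP*W + W*cQ + cP*(W*Q)) ((P*W)*cQ)]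
      _ ≤ frobNorm (P*W + W*Q + P*(W*Q) + cP*W + W*cQ) + frobNorm (cP*(W*Q))
          + frobNorm ((P*W)*cQ) + frobNorm (cP*(W*cQ)) := by
            linarith [frobNorm_add_le (P*W + W*Q + P*(W*Q) + cP*W + W*cQ) (cP*(W*Q))]
      _ ≤ frobNorm (P*W + W*Q + P*(W*Q) + cP*W) + frobNorm (W*cQ) + frobNorm (cP*(W*Q))
          + frobNorm ((P*W)*cQ) + frobNorm (cP*(W*cQ)) := by
            linarith [frobNorm_add_le (P*W + W*Q + P*(W*Q) + cP*W) (W*cQ)]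
      _ ≤ frobNorm (P*W + W*Q + P*(W*Q)) + frobNorm (cP*W) + frobNorm (W*cQ)
          + frobNorm (cP*(W*Q)) + frobNorm ((P*W)*cQ) + frobNorm (cP*(W*cQ)) := by
            linarith [frobNorm_add_le (P*W + W*Q + P*(W*Q)) (cP*W)]
      _ ≤ frobNorm (P*W + W*Q) + frobNorm (P*(W*Q)) + frobNorm (cP*W) + frobNorm (W*cQ)
          + frobNorm (cP*(W*Q)) + frobNorm ((P*W)*cQ) + frobNorm (cP*(W*cQ)) := by
            linarith [frobNorm_add_le (P*W + W*Q) (P*(W*Q))]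
      _ ≤ frobNorm (P*W) + frobNorm (W*Q) + frobNorm (P*(W*Q)) + frobNorm (cP*W)
          + frobNorm (W*cQ) + frobNorm (cP*(W*Q)) + frobNorm ((P*W)*cQ)
          + frobNorm (cP*(W*cQ)) := by linarith [frobNorm_add_le (P*W) (W*Q)]
      _ ≤ _ := by linarith [hPW, hWQ, ht3, ht4, hWcQ, ht6, ht7, ht8]
  clear hdecomp hP hQ hcP hcQ hPW hWQ hWcQ ht3 ht4 ht6 ht7 ht8 hF hW
  clear hPdef hQdef hcPdef hcQdef ha' hb' hab hbb hs0
  clear P Q cP cQ W Gin Gout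
  -- polynomial estimates
  set K : ℝ := γ * (η ^ 2 + (B / 2) * η ^ 3 + (B ^ 2 / 8) * η ^ 4) with hK
  have hK0 : 0 ≤ K := by rw [hK]; positivity
  clear_value K
  have hsum : F ≤ (η * γ + K * B) * (a + b) := by
    have hx1 : η^2*γ*(a*b + (b*b + a*a)/2) ≤ η^2*γ*(B*(a+b)) := by
      have h1 : (a+b)*(a+b) ≤ (2*B)*(a+b) := by nlinarith
      have : a*b + (b*b+a*a)/2 ≤ B*(a+b) := by nlinarith
      exact mul_le_mul_of_nonneg_left this (by positivity)
    have hx2 : η^3*γ/2*(a*b*(a+b)) ≤ η^3*γ/2*(B^2*(a+b)) := by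
      have h2' : a*b ≤ B^2 := by nlinarith
      have : a*b*(a+b) ≤ B^2*(a+b) := mul_le_mul_of_nonneg_right h2' (by linarith)
      exact mul_le_mul_of_nonneg_left this (by positivity)
    have hx3 : η^4*γ/4*(a*a*(b*b)) ≤ η^4*γ/4*(B^3*(a+b)/2) := by
      have h1 : a*b ≤ B*(a+b)/2 := by nlinarith
      have h2 : a*b ≤ B^2 := by nlinarith
      have h3 : (a*b)*(a*b) ≤ B^2*(B*(a+b)/2) :=
        mul_le_mul h2 h1 (mul_nonneg ha0 hb0) (by positivity)
      have : a*a*(b*b) ≤ B^3*(a+b)/2 := by nlinarith [h3]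
      exact mul_le_mul_of_nonneg_left this (by positivity)
    rw [hK]
    linarith [htri, hx1, hx2, hx3]
  -- conclude
  have hrhs : ((η*γ + K*B)*(a+b))^2 ≤ (4*η^2*γ^2 + 4*K^2*B^2)*(a^2+b^2) := by
    have h1 : (η*γ + K*B)^2 ≤ 2*((η*γ)^2 + (K*B)^2) := by nlinarith [sq_nonneg (η*γ - K*B)]
    have h2 : (a+b)^2 ≤ 2*(a^2+b^2) := by nlinarith [sq_nonneg (a-b)]
    calc ((η*γ + K*B)*(a+b))^2 = (η*γ + K*B)^2 * (a+b)^2 := by ring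
      _ ≤ (2*((η*γ)^2 + (K*B)^2)) * (2*(a^2+b^2)) := by
          apply mul_le_mul h1 h2 (sq_nonneg _) (by positivity)
      _ = (4*η^2*γ^2 + 4*K^2*B^2)*(a^2+b^2) := by ring
  calc F^2 ≤ ((η*γ + K*B)*(a+b))^2 := by
        apply pow_le_pow_left₀ hF0 hsum
    _ ≤ (4*η^2*γ^2 + 4*K^2*B^2)*(a^2+b^2) := hrhs
    _ = _ := by ring
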